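/- arXiv:2202.06494 — 2 statements merged into one kernel-verified Lean document; each statement's English description precedes it below -/
import Mathlib

section
/- If K₁ satisfies ε₁-differential privacy and K₂ satisfies ε₂-differential privacy and they use independent randomness, then the mechanism D ↦ (K₁(D), K₂(D)) satisfies (ε₁ + ε₂)-differential privacy. -/
/-! ε-differential privacy of `K` is the inequality of measures `K D₁ ≤ exp ε • K D₂`.
The product of measures is monotone in both factors and pulls out scalars, so these bounds
multiply, and `exp ε₁ * exp ε₂ = exp (ε₁ + ε₂)`. -/

open MeasureTheory

namespace MeasureTheory.Measure

variable {α β : Type*} [MeasurableSpace α] [MeasurableSpace β]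

theorem le_smul_iff {μ ν : Measure α} {c : ENNReal} :
    μ ≤ c • ν ↔ ∀ s, MeasurableSet s → μ s ≤ c * ν s := by
  simp only [Measure.le_iff, Measure.smul_apply, smul_eq_mul]

theorem prod_le_smul_prod {μ μ' : Measure α} {ν ν' : Measure β} [SFinite ν'] {c d : ENNReal}
    (hμ : μ ≤ c • μ') (hν : ν ≤ d • ν') : μ.prod ν ≤ (c * d) • μ'.prod ν' :=
  calc μ.prod ν ≤ (c • μ').prod (d • ν') := prod_mono hμ hν
    _ = (c * d) • μ'.prod ν' := by rw [prod_smul_left, prod_smul_right, smul_smul]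

end MeasureTheory.Measure

/-- Sequential composition: if `K₁` is `ε₁`-differentially private and `K₂` is
`ε₂`-differentially private and they use independent randomness (modeled by the
product measure `(K₁ D).prod (K₂ D)`), then the combined mechanism
`D ↦ (K₁(D), K₂(D))` satisfies `(ε₁ + ε₂)`-differential privacy. -/
theorem composition_dp {D Ω₁ Ω₂ : Type*} [MeasurableSpace Ω₁] [MeasurableSpace Ω₂]
    (K₁ : D → Measure Ω₁) (K₂ : D → Measure Ω₂) (N : D → D → Prop) (ε₁ ε₂ : ℝ)
    [∀ d, SigmaFinite (K₂ d)]
    (hDP₁ : ∀ D₁ D₂, N D₁ D₂ → ∀ S : Set Ω₁, MeasurableSet S →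
      K₁ D₁ S ≤ ENNReal.ofReal (Real.exp ε₁) * K₁ D₂ S)
    (hDP₂ : ∀ D₁ D₂, N D₁ D₂ → ∀ S : Set Ω₂, MeasurableSet S →
      K₂ D₁ S ≤ ENNReal.ofReal (Real.exp ε₂) * K₂ D₂ S) :
    ∀ D₁ D₂, N D₁ D₂ → ∀ S : Set (Ω₁ × Ω₂), MeasurableSet S →
      ((K₁ D₁).prod (K₂ D₁)) S ≤ ENNReal.ofReal (Real.exp (ε₁ + ε₂)) * ((K₁ D₂).prod (K₂ D₂)) S := by
  intro D₁ D₂ hN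
  rw [Real.exp_add, ENNReal.ofReal_mul (Real.exp_nonneg _), ← Measure.le_smul_iff]
  exact Measure.prod_le_smul_prod (Measure.le_smul_iff.2 (hDP₁ D₁ D₂ hN))
    (Measure.le_smul_iff.2 (hDP₂ D₁ D₂ hN))
end

section
/- The Laplace mechanism K_f(D) = f(D) + Lap(Δf/ε), where Lap(b) is a Laplace random variable with density (1/(2b))·exp(−|x|/b), satisfies ε-differential privacy for any real-valued query f with global sensitivity Δf. -/
open MeasureTheory

/-- The Laplace distribution with scale `b`, given by density `(1/(2b)) exp (-|x|/b)`. -/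
noncomputable def laplaceMeasure (b : ℝ) : Measure ℝ :=
  volume.withDensity (fun x => ENNReal.ofReal ((1 / (2 * b)) * Real.exp (-|x| / b)))

/-- The Laplace mechanism `K_f(D) = f(D) + Lap(Δf/ε)` satisfies `ε`-differential privacy
for any real-valued query `f` with global sensitivity `Δf`. -/
theorem laplace_mechanism_dp {D : Type*} (N : D → D → Prop) (f : D → ℝ) (Δf ε : ℝ)
    (hΔ : 0 < Δf) (hε : 0 < ε)
    (hsens : ∀ D₁ D₂, N D₁ D₂ → |f D₁ - f D₂| ≤ Δf) :
    ∀ D₁ D₂, N D₁ D₂ → ∀ S : Set ℝ, MeasurableSet S →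
      (laplaceMeasure (Δf / ε)).map (fun x => f D₁ + x) S ≤
        ENNReal.ofReal (Real.exp ε) * (laplaceMeasure (Δf / ε)).map (fun x => f D₂ + x) S := by
  intro D₁ D₂ hN S hS
  set b := Δf / ε with hb_def
  have hb : 0 < b := div_pos hΔ hε
  set g : ℝ → ENNReal := fun x => ENNReal.ofReal ((1 / (2 * b)) * Real.exp (-|x| / b)) with hg
  have key : ∀ a : ℝ, (laplaceMeasure b).map (fun x => a + x) S
      = ∫⁻ x in (fun x => a + x) ⁻¹' S, g x := by
    intro a
    rw [Measure.map_apply (measurable_const_add _) hS, laplaceMeasure,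
      withDensity_apply _ (hS.preimage (measurable_const_add _))]
  rw [key, key]
  set c := f D₁ - f D₂ with hc
  have hcb : |c| ≤ Δf := hsens _ _ hN
  set T₁ : Set ℝ := (fun x => f D₁ + x) ⁻¹' S with hT1
  set T₂ : Set ℝ := (fun x => f D₂ + x) ⁻¹' S with hT2
  have hT1m : MeasurableSet T₁ := hS.preimage (measurable_const_add _)
  have hT2m : MeasurableSet T₂ := hS.preimage (measurable_const_add _)
  have hshift : ∫⁻ x in T₁, g x = ∫⁻ x in T₂, g (x - c) := by
    rw [← lintegral_indicator hT1m, ← lintegral_indicator hT2m,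
      ← lintegral_sub_right_eq_self (fun x => Set.indicator T₁ g x) c]
    congr 1
    funext x
    have hmem : x - c ∈ T₁ ↔ x ∈ T₂ := by
      have heq : f D₁ + (x - c) = f D₂ + x := by rw [hc]; ring
      simp only [hT1, hT2, Set.mem_preimage, heq]
    by_cases hx : x ∈ T₂
    · rw [Set.indicator_of_mem (hmem.mpr hx), Set.indicator_of_mem hx]
    · rw [Set.indicator_of_notMem (fun h => hx (hmem.mp h)), Set.indicator_of_notMem hx]
  rw [hshift]
  have hpt : ∀ x : ℝ, g (x - c) ≤ ENNReal.ofReal (Real.exp ε) * g x := by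
    intro x
    rw [hg]
    simp only
    rw [← ENNReal.ofReal_mul (Real.exp_nonneg _)]
    apply ENNReal.ofReal_le_ofReal
    rw [show Real.exp ε * (1 / (2 * b) * Real.exp (-|x| / b))
        = 1 / (2 * b) * (Real.exp ε * Real.exp (-|x| / b)) by ring,
      ← Real.exp_add]
    apply mul_le_mul_of_nonneg_left _ (by positivity)
    apply Real.exp_le_exp.mpr
    rw [div_le_iff₀ hb]
    have hexp : (ε + -|x| / b) * b = ε * b - |x| := by rw [add_mul, neg_div, neg_mul, div_mul_cancel₀ _ hb.ne']; ring
    rw [hexp]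
    have h1 : |x| - |x - c| ≤ |c| := by
      have := abs_sub_abs_le_abs_sub x (x - c)
      simpa using this
    have h2 : ε * b = Δf := by rw [hb_def]; field_simp
    linarith
  calc ∫⁻ x in T₂, g (x - c)
      ≤ ∫⁻ x in T₂, ENNReal.ofReal (Real.exp ε) * g x :=
        lintegral_mono fun x => hpt x
    _ = ENNReal.ofReal (Real.exp ε) * ∫⁻ x in T₂, g x := by
        rw [lintegral_const_mul _ (by measurability)]
end
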